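/- arXiv:2101.10185 — 3 statements merged into one kernel-verified Lean document; each statement's English description precedes it below -/
import Mathlib

section
/- Let G be a finite simple graph of order n ≥ 1. For every integer m with n+1 ≤ m ≤ 2n, the number of accurate dominating sets of the corona G ∘ K_1 of cardinality m equals C(n, m−n) · 2^{2n−m}. -/
/-- `D` is a dominating set of the simple graph `G`: every vertex not in `D`
is adjacent to at least one vertex in `D`. -/
def IsDomSet {V : Type*} (G : SimpleGraph V) (D : Finset V) : Prop :=
  ∀ v : V, v ∉ D → ∃ u ∈ D, G.Adj u v

/-- `D` is an accurate dominating set of `G`: a dominating set such that no subset of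
`V \ D` of cardinality `|D|` is a dominating set of `G`. -/
def IsAccDomSet {V : Type*} (G : SimpleGraph V) (D : Finset V) : Prop :=
  IsDomSet G D ∧
    ∀ E : Finset V, (∀ v ∈ E, v ∉ D) → E.card = D.card → ¬ IsDomSet G E

/-- The domination number of `G`: the minimum cardinality of a dominating set. -/
noncomputable def domNum {V : Type*} (G : SimpleGraph V) : ℕ :=
  sInf {k | ∃ D : Finset V, IsDomSet G D ∧ D.card = k}

/-- The accurate domination number of `G`: the minimum cardinality of an accurate
dominating set. -/
noncomputable def accDomNum {V : Type*} (G : SimpleGraph V) : ℕ :=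
  sInf {k | ∃ D : Finset V, IsAccDomSet G D ∧ D.card = k}

/-- `d(G,i)`: the number of dominating sets of `G` of cardinality `i`. -/
noncomputable def numDomSets {V : Type*} (G : SimpleGraph V) (i : ℕ) : ℕ :=
  Set.ncard {D : Finset V | IsDomSet G D ∧ D.card = i}

/-- `d_a(G,i)`: the number of accurate dominating sets of `G` of cardinality `i`. -/
noncomputable def numAccDomSets {V : Type*} (G : SimpleGraph V) (i : ℕ) : ℕ :=
  Set.ncard {D : Finset V | IsAccDomSet G D ∧ D.card = i}

/-- The corona `G ∘ K_1`: for each vertex `v` of `G` (sitting as `Sum.inl v`) a new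
pendant vertex `Sum.inr v` is attached. -/
def corona {V : Type*} (G : SimpleGraph V) : SimpleGraph (V ⊕ V) :=
  SimpleGraph.fromRel (fun x y =>
    (∃ u v : V, x = Sum.inl u ∧ y = Sum.inl v ∧ G.Adj u v) ∨
    (∃ v : V, x = Sum.inl v ∧ y = Sum.inr v))

/-!
A set dominates `G ∘ K₁` iff it meets every pendant edge `{v, v'}`, and a dominating set
containing more than half of the vertices is automatically accurate, since its complement is
too small to contain a set of the same size. For `m > n` it remains to count the `m`-sets
meeting all `n` pendant edges: the `m - n` edges they contain entirely can be chosen in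
`C(n, m - n)` ways, and each of the other `2n - m` edges contributes one of its two ends.
-/

open Finset

section Accurate

variable {V : Type*} [Fintype V] (G : SimpleGraph V)

theorem IsDomSet.isAccDomSet_of_card_lt {D : Finset V} (hD : IsDomSet G D)
    (hcard : Fintype.card V < 2 * #D) : IsAccDomSet G D := by
  classical
  refine ⟨hD, fun E hE hED _ => ?_⟩
  have : #E ≤ Fintype.card V - #D := by
    rw [← card_compl]
    exact card_le_card fun v hv => mem_compl.2 (hE v hv)
  omega

theorem numAccDomSets_eq_numDomSets {m : ℕ} (hm : Fintype.card V < 2 * m) :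
    numAccDomSets G m = numDomSets G m := by
  unfold numAccDomSets numDomSets
  congr 1
  ext D
  exact ⟨fun ⟨hD, hcard⟩ => ⟨hD.1, hcard⟩,
    fun ⟨hD, hcard⟩ => ⟨hD.isAccDomSet_of_card_lt G (hcard ▸ hm), hcard⟩⟩

end Accurate

section Corona

variable {V : Type*} (G : SimpleGraph V)

theorem corona_adj_inl_inr (v : V) : (corona G).Adj (.inl v) (.inr v) := by
  simp [corona]

theorem corona_adj_inr_iff {x : V ⊕ V} {v : V} : (corona G).Adj x (.inr v) ↔ x = .inl v := by
  refine ⟨fun h => ?_, fun h => h ▸ corona_adj_inl_inr G v⟩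
  obtain ⟨-, h | h⟩ := (SimpleGraph.fromRel_adj _ _ _).1 h <;> aesop

theorem isDomSet_corona_iff {D : Finset (V ⊕ V)} :
    IsDomSet (corona G) D ↔ ∀ v, .inl v ∈ D ∨ .inr v ∈ D := by
  refine ⟨fun h v => ?_, fun h x hx => ?_⟩
  · by_contra! hv
    obtain ⟨u, hu, hadj⟩ := h _ hv.2
    exact hv.1 ((corona_adj_inr_iff G).1 hadj ▸ hu)
  · rcases x with v | v
    · exact ⟨.inr v, (h v).resolve_left hx, (corona_adj_inl_inr G v).symm⟩
    · exact ⟨.inl v, (h v).resolve_right hx, corona_adj_inl_inr G v⟩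

end Corona

section Counting

variable {α : Type*} [Fintype α] [DecidableEq α]

/-- A covering pair `(L, R)` with `#L + #R = |α| + k` is determined by `A = L ∩ R`, of size `k`,
and `B = Rᶜ ⊆ Aᶜ`; conversely `L = A ∪ B` and `R = Bᶜ`. -/
theorem card_covering_pairs (k : ℕ) :
    #{p : Finset α × Finset α | p.1 ∪ p.2 = univ ∧ #p.1 + #p.2 = Fintype.card α + k} =
      (Fintype.card α).choose k * 2 ^ (Fintype.card α - k) := by
  have hcount : #((univ.powersetCard k).sigma fun A : Finset α => Aᶜ.powerset) =
      (Fintype.card α).choose k * 2 ^ (Fintype.card α - k) := by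
    rw [card_sigma, sum_congr rfl fun A hA => by
      rw [card_powerset, card_compl, (mem_powersetCard_univ.1 hA)], sum_const,
      card_powersetCard, card_univ, smul_eq_mul]
  rw [← hcount]
  refine card_nbij' (fun p => ⟨p.1 ∩ p.2, p.2ᶜ⟩) (fun q => (q.1 ∪ q.2, q.2ᶜ)) ?_ ?_ ?_ ?_
  · rintro ⟨L, R⟩ hp
    simp only [coe_filter, Set.mem_ofPred_eq, mem_univ, true_and] at hp
    have := card_inter_add_card_union L R
    simp only [coe_sigma, Set.mem_sigma_iff, mem_coe, mem_powersetCard_univ, mem_powerset]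
    refine ⟨?_, compl_subset_compl.2 inter_subset_right⟩
    rw [hp.1, card_univ] at this
    omega
  · rintro ⟨A, B⟩ hq
    simp only [coe_sigma, Set.mem_sigma_iff, mem_coe, mem_powersetCard_univ, mem_powerset] at hq
    have hAB : Disjoint A B := disjoint_left.2 fun v hA hB => mem_compl.1 (hq.2 hB) hA
    simp only [coe_filter, Set.mem_ofPred_eq, mem_univ, true_and]
    refine ⟨by simp [union_assoc], ?_⟩
    rw [card_union_of_disjoint hAB, card_compl, hq.1]
    have := card_le_univ B
    omega
  · rintro ⟨L, R⟩ hp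
    simp only [coe_filter, Set.mem_ofPred_eq, mem_univ, true_and] at hp
    simp only [compl_compl, Prod.mk.injEq, and_true]
    ext v
    have hv : v ∈ L ∪ R := hp.1 ▸ mem_univ v
    simp only [mem_union, mem_inter, mem_compl] at hv ⊢
    tauto
  · rintro ⟨A, B⟩ hq
    simp only [coe_sigma, Set.mem_sigma_iff, mem_coe, mem_powersetCard_univ, mem_powerset] at hq
    have hA : (A ∪ B) ∩ Bᶜ = A := by
      ext v
      have := @hq.2 v
      simp only [mem_inter, mem_union, mem_compl] at this ⊢
      tauto
    simp [hA]

theorem card_filter_inl_or_inr_mem_eq_card_covering_pairs (m : ℕ) :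
    #{D : Finset (α ⊕ α) | (∀ v, .inl v ∈ D ∨ .inr v ∈ D) ∧ #D = m} =
      #{p : Finset α × Finset α | p.1 ∪ p.2 = univ ∧ #p.1 + #p.2 = m} := by
  refine card_equiv sumEquiv.toEquiv fun D => ?_
  simp [eq_univ_iff_forall, card_toLeft_add_card_toRight]

end Counting

theorem corona_numAccDomSets_general {V : Type*} [Fintype V] (G : SimpleGraph V)
    (m : ℕ) (h1 : Fintype.card V + 1 ≤ m) :
    numAccDomSets (corona G) m =
      Nat.choose (Fintype.card V) (m - Fintype.card V) *
        2 ^ (2 * Fintype.card V - m) := by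
  classical
  have hdom : {D | IsDomSet (corona G) D ∧ #D = m} =
      ↑({D : Finset (V ⊕ V) | (∀ v, .inl v ∈ D ∨ .inr v ∈ D) ∧ #D = m} : Finset _) := by
    ext D
    simp [isDomSet_corona_iff]
  rw [numAccDomSets_eq_numDomSets _ (by rw [Fintype.card_sum]; omega), numDomSets, hdom,
    Set.ncard_coe_finset, card_filter_inl_or_inr_mem_eq_card_covering_pairs]
  obtain ⟨k, rfl⟩ : ∃ k, m = Fintype.card V + k := ⟨m - Fintype.card V, by omega⟩
  rw [card_covering_pairs, Nat.add_sub_cancel_left, two_mul, Nat.add_sub_add_left]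

/-- For a graph `G` of order `n ≥ 1` and every `m` with `n + 1 ≤ m ≤ 2n`, the number
of accurate dominating sets of the corona `G ∘ K_1` of cardinality `m` equals
`C(n, m - n) * 2^(2n - m)`. -/
theorem corona_numAccDomSets {V : Type*} [Fintype V] [Nonempty V] (G : SimpleGraph V)
    (m : ℕ) (h1 : Fintype.card V + 1 ≤ m) (h2 : m ≤ 2 * Fintype.card V) :
    numAccDomSets (corona G) m =
      Nat.choose (Fintype.card V) (m - Fintype.card V) *
        2 ^ (2 * Fintype.card V - m) :=
  corona_numAccDomSets_general G m h1
end

section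
/- Let n ≥ 6 and let i ≥ 4 be integers. Then the number of accurate dominating sets of the path P_n of cardinality i satisfies d_a(P_n, i) + d(P_{n−6}, i−4) ≥ 2·d(P_{n−3}, i−2), where P_0 is the empty graph (whose unique dominating set is the empty set). -/
/-!
Write `L S = {0, 1} ∪ (S + 3)` and `R S = S ∪ {k + 1, k + 2}`. Both turn a dominating set `S` of
`P_k` into a dominating set of `P_{k+3}` containing the closed neighbourhood of an end vertex,
hence into an accurate one: a set avoiding it cannot dominate that end vertex. On the dominating
sets of `P_{n-3}` of size `i - 2` both maps are injective, so inclusion–exclusion gives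
`2 d(P_{n-3}, i-2) ≤ d_a(P_n, i) + |im L ∩ im R|`. Finally `L S₁ = R S₂` forces `S₁ = R T` with
`T` a dominating set of `P_{n-6}` of size `i - 4`, which bounds the intersection by
`d(P_{n-6}, i-4)`.
-/

open SimpleGraph Finset

theorem IsDomSet.isAccDomSet_of_adj_subset {V : Type*} {G : SimpleGraph V} {D : Finset V}
    (hD : IsDomSet G D) {v : V} (hv : v ∈ D) (hN : ∀ w, G.Adj w v → w ∈ D) :
    IsAccDomSet G D := by
  refine ⟨hD, fun E hE _ hE_dom => ?_⟩
  obtain ⟨u, hu, huv⟩ := hE_dom v fun h => hE v h hv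
  exact hE u hu (hN u huv)

def domSetsOfCard {V : Type*} (G : SimpleGraph V) (i : ℕ) : Set (Finset V) :=
  {D | IsDomSet G D ∧ D.card = i}

namespace PathDomination

variable {k : ℕ}

def extendLeft (S : Finset (Fin k)) : Finset (Fin (k + 3)) :=
  {⟨0, by omega⟩, ⟨1, by omega⟩} ∪ S.map (Fin.addNatEmb 3)

def extendRight (S : Finset (Fin k)) : Finset (Fin (k + 3)) :=
  {⟨k + 1, by omega⟩, ⟨k + 2, by omega⟩} ∪ S.map (Fin.castAddEmb 3)

lemma mem_extendLeft {S : Finset (Fin k)} {v : Fin (k + 3)} :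
    v ∈ extendLeft S ↔ v.val < 2 ∨ ∃ x ∈ S, x.addNat 3 = v := by
  simp only [extendLeft, mem_union, mem_insert, mem_singleton, mem_map, Fin.addNatEmb_apply]
  refine or_congr_left ?_
  simp only [Fin.ext_iff]
  omega

lemma mem_extendRight {S : Finset (Fin k)} {v : Fin (k + 3)} :
    v ∈ extendRight S ↔ k < v.val ∨ ∃ x ∈ S, x.castAdd 3 = v := by
  simp only [extendRight, mem_union, mem_insert, mem_singleton, mem_map, Fin.castAddEmb_apply]
  refine or_congr_left ?_
  simp only [Fin.ext_iff]
  omega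

lemma addNat_mem_extendLeft {S : Finset (Fin k)} {x : Fin k} :
    x.addNat 3 ∈ extendLeft S ↔ x ∈ S := by
  simp [mem_extendLeft, Fin.addNat_inj]

lemma castAdd_mem_extendRight {S : Finset (Fin k)} {x : Fin k} :
    x.castAdd 3 ∈ extendRight S ↔ x ∈ S := by
  simp [mem_extendRight, x.isLt.not_gt]

lemma extendLeft_injective : Function.Injective (extendLeft (k := k)) := fun S T h => by
  ext x
  rw [← addNat_mem_extendLeft, h, addNat_mem_extendLeft]

lemma extendRight_injective : Function.Injective (extendRight (k := k)) := fun S T h => by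
  ext x
  rw [← castAdd_mem_extendRight, h, castAdd_mem_extendRight]

lemma card_extendLeft (S : Finset (Fin k)) : (extendLeft S).card = S.card + 2 := by
  rw [extendLeft, card_union_of_disjoint, card_map, card_pair (by simp), add_comm]
  simp only [Finset.disjoint_left, mem_insert, mem_singleton, mem_map, Fin.addNatEmb_apply]
  rintro _ (rfl | rfl) ⟨x, -, hx⟩ <;> simp [Fin.ext_iff] at hx

lemma card_extendRight (S : Finset (Fin k)) : (extendRight S).card = S.card + 2 := by
  rw [extendRight, card_union_of_disjoint, card_map, card_pair (by simp), add_comm]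
  simp only [Finset.disjoint_left, mem_insert, mem_singleton, mem_map, Fin.castAddEmb_apply]
  rintro _ (rfl | rfl) ⟨x, -, hx⟩ <;> simp [Fin.ext_iff] at hx <;> omega

lemma isDomSet_extendLeft {S : Finset (Fin k)} (hS : IsDomSet (pathGraph k) S) :
    IsDomSet (pathGraph (k + 3)) (extendLeft S) := by
  intro v hv
  rcases lt_or_ge v.val 3 with hv3 | hv3
  · have hv2 : 2 ≤ v.val := by
      by_contra h
      exact hv (mem_extendLeft.2 (Or.inl (by omega)))
    refine ⟨⟨1, by omega⟩, mem_extendLeft.2 (Or.inl (by simp)), ?_⟩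
    rw [pathGraph_adj, Fin.val_mk]
    omega
  · obtain ⟨x, rfl⟩ : ∃ x : Fin k, x.addNat 3 = v := ⟨⟨v - 3, by omega⟩, by ext; simp only [Fin.val_addNat]; omega⟩
    obtain ⟨u, hu, hux⟩ := hS x (mt addNat_mem_extendLeft.2 hv)
    refine ⟨u.addNat 3, addNat_mem_extendLeft.2 hu, ?_⟩
    rw [pathGraph_adj] at hux ⊢
    simp only [Fin.val_addNat]
    omega

lemma isDomSet_extendRight {S : Finset (Fin k)} (hS : IsDomSet (pathGraph k) S) :
    IsDomSet (pathGraph (k + 3)) (extendRight S) := by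
  intro v hv
  rcases lt_or_ge v.val k with hvk | hvk
  · obtain ⟨x, rfl⟩ : ∃ x : Fin k, x.castAdd 3 = v := ⟨⟨v, hvk⟩, rfl⟩
    obtain ⟨u, hu, hux⟩ := hS x (mt castAdd_mem_extendRight.2 hv)
    refine ⟨u.castAdd 3, castAdd_mem_extendRight.2 hu, ?_⟩
    rw [pathGraph_adj] at hux ⊢
    simpa only [Fin.val_castAdd] using hux
  · have hv_eq : v.val = k := by
      by_contra h
      exact hv (mem_extendRight.2 (Or.inl (by omega)))
    refine ⟨⟨k + 1, by omega⟩, mem_extendRight.2 (Or.inl (by simp)), ?_⟩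
    rw [pathGraph_adj, Fin.val_mk]
    omega

lemma isAccDomSet_extendLeft {S : Finset (Fin k)} (hS : IsDomSet (pathGraph k) S) :
    IsAccDomSet (pathGraph (k + 3)) (extendLeft S) :=
  (isDomSet_extendLeft hS).isAccDomSet_of_adj_subset (v := ⟨0, by omega⟩)
    (mem_extendLeft.2 (Or.inl (by simp)))
    fun w hw => mem_extendLeft.2 (Or.inl (by simp only [pathGraph_adj] at hw; omega))

lemma isAccDomSet_extendRight {S : Finset (Fin k)} (hS : IsDomSet (pathGraph k) S) :
    IsAccDomSet (pathGraph (k + 3)) (extendRight S) :=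
  (isDomSet_extendRight hS).isAccDomSet_of_adj_subset (v := ⟨k + 2, by omega⟩)
    (mem_extendRight.2 (Or.inl (by simp)))
    fun w hw => mem_extendRight.2 (Or.inl (by simp only [pathGraph_adj] at hw; omega))

lemma isDomSet_of_isDomSet_extendRight {T : Finset (Fin k)}
    (hT : IsDomSet (pathGraph (k + 3)) (extendRight T)) : IsDomSet (pathGraph k) T := by
  intro w hw
  obtain ⟨u, hu, huw⟩ := hT _ (mt castAdd_mem_extendRight.1 hw)
  rw [pathGraph_adj, Fin.val_castAdd] at huw
  rcases mem_extendRight.1 hu with hku | ⟨x, hx, rfl⟩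
  · omega
  · refine ⟨x, hx, ?_⟩
    rw [pathGraph_adj]
    simpa only [Fin.val_castAdd] using huw

lemma exists_eq_extendRight_of_extendLeft_eq {m : ℕ} {S₁ S₂ : Finset (Fin (m + 3))}
    (h : extendLeft S₁ = extendRight S₂) : ∃ T, S₁ = extendRight T := by
  refine ⟨univ.filter fun x => x.castAdd 3 ∈ S₁, ?_⟩
  ext v
  have hv : v ∈ S₁ ↔ v.addNat 3 ∈ extendRight S₂ := by rw [← h, addNat_mem_extendLeft]
  rw [mem_extendRight, Fin.val_addNat] at hv
  rw [mem_extendRight]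
  constructor
  · intro hvS
    -- `extendRight S₂` misses the vertex `m + 3`
    have hvm : v.val ≠ m := by
      rcases hv.1 hvS with hlt | ⟨x, -, hx⟩
      · omega
      · rw [Fin.ext_iff, Fin.val_castAdd, Fin.val_addNat] at hx
        omega
    rcases lt_or_gt_of_ne hvm with hlt | hgt
    · exact Or.inr ⟨⟨v, hlt⟩, mem_filter.2 ⟨mem_univ _, hvS⟩, rfl⟩
    · exact Or.inl hgt
  · rintro (hgt | ⟨x, hx, rfl⟩)
    · exact hv.2 (Or.inl (by omega))
    · exact (mem_filter.1 hx).2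

lemma image_extendLeft_union_image_extendRight_subset (i : ℕ) :
    extendLeft '' domSetsOfCard (pathGraph k) i ∪ extendRight '' domSetsOfCard (pathGraph k) i ⊆
      {D | IsAccDomSet (pathGraph (k + 3)) D ∧ D.card = i + 2} := by
  rintro _ (⟨S, ⟨hS, rfl⟩, rfl⟩ | ⟨S, ⟨hS, rfl⟩, rfl⟩)
  · exact ⟨isAccDomSet_extendLeft hS, card_extendLeft S⟩
  · exact ⟨isAccDomSet_extendRight hS, card_extendRight S⟩

lemma image_extendLeft_inter_image_extendRight_subset (m j : ℕ) :
    extendLeft '' domSetsOfCard (pathGraph (m + 3)) (j + 2) ∩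
        extendRight '' domSetsOfCard (pathGraph (m + 3)) (j + 2) ⊆
      (extendLeft ∘ extendRight) '' domSetsOfCard (pathGraph m) j := by
  rintro _ ⟨⟨S₁, ⟨hS₁, hcard⟩, rfl⟩, ⟨S₂, -, h⟩⟩
  obtain ⟨T, rfl⟩ := exists_eq_extendRight_of_extendLeft_eq h.symm
  refine ⟨T, ⟨isDomSet_of_isDomSet_extendRight hS₁, ?_⟩, rfl⟩
  rw [card_extendRight] at hcard
  omega

theorem two_mul_numDomSets_le (m j : ℕ) :
    2 * numDomSets (pathGraph (m + 3)) (j + 2) ≤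
      numAccDomSets (pathGraph (m + 3 + 3)) (j + 2 + 2) + numDomSets (pathGraph m) j := by
  set X := domSetsOfCard (pathGraph (m + 3)) (j + 2)
  calc 2 * numDomSets (pathGraph (m + 3)) (j + 2)
      = (extendLeft '' X).ncard + (extendRight '' X).ncard := by
        rw [Set.ncard_image_of_injective _ extendLeft_injective,
          Set.ncard_image_of_injective _ extendRight_injective, two_mul]
        rfl
    _ = (extendLeft '' X ∪ extendRight '' X).ncard + (extendLeft '' X ∩ extendRight '' X).ncard :=
        (Set.ncard_union_add_ncard_inter _ _).symm
    _ ≤ numAccDomSets (pathGraph (m + 3 + 3)) (j + 2 + 2) + numDomSets (pathGraph m) j := by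
        gcongr
        · exact Set.ncard_le_ncard (image_extendLeft_union_image_extendRight_subset _)
        · exact (Set.ncard_le_ncard (image_extendLeft_inter_image_extendRight_subset m j)).trans
            (Set.ncard_image_le (Set.toFinite _))

end PathDomination

/-- For `n ≥ 6` and `i ≥ 4`,
`d_a(P_n, i) + d(P_{n-6}, i-4) ≥ 2 * d(P_{n-3}, i-2)`. -/
theorem path_numAccDomSets_lower2 (n i : ℕ) (hn : 6 ≤ n) (hi : 4 ≤ i) :
    2 * numDomSets (SimpleGraph.pathGraph (n - 3)) (i - 2) ≤
      numAccDomSets (SimpleGraph.pathGraph n) i +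
        numDomSets (SimpleGraph.pathGraph (n - 6)) (i - 4) := by
  obtain ⟨m, rfl⟩ : ∃ m, n = m + 3 + 3 := ⟨n - 6, by omega⟩
  obtain ⟨j, rfl⟩ : ∃ j, i = j + 2 + 2 := ⟨i - 4, by omega⟩
  rw [show m + 3 + 3 - 3 = m + 3 by omega, show m + 3 + 3 - 6 = m by omega,
    show j + 2 + 2 - 2 = j + 2 by omega, show j + 2 + 2 - 4 = j by omega]
  exact PathDomination.two_mul_numDomSets_le m j
end

section
/- Let n ≥ 3 and let D be a dominating set of the cycle C_n with |D| ≤ n/2. If D does not contain three (cyclically) consecutive vertices of C_n, then D is not an accurate dominating set of C_n. -/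
/-!
Send each `j ∈ D` to the neighbour `j - 1` if `j + 1 ∈ D` and to `j + 1` otherwise. Since `D`
has no three consecutive vertices, this neighbour lies outside `D`, and the image of `D` is again
a dominating set of the cycle. It has at most `|D| ≤ n - |D|` elements, so it can be enlarged
inside `V ∖ D` to a dominating set of cardinality exactly `|D|`, and `D` is not accurate.
-/

open Finset SimpleGraph

theorem IsDomSet.mono {V : Type*} {G : SimpleGraph V} {D E : Finset V} (hD : IsDomSet G D)
    (hDE : D ⊆ E) : IsDomSet G E := by
  intro v hv
  obtain ⟨u, hu, huv⟩ := hD v fun h => hv (hDE h)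
  exact ⟨u, hDE hu, huv⟩

theorem not_isAccDomSet_of_isDomSet_of_disjoint {V : Type*} [Fintype V] [DecidableEq V]
    {G : SimpleGraph V} {D E : Finset V} (hE : IsDomSet G E) (hED : Disjoint E D)
    (hle : #E ≤ #D) (hD : 2 * #D ≤ Fintype.card V) : ¬ IsAccDomSet G D := by
  rintro ⟨-, hacc⟩
  have hEcompl : E ⊆ Dᶜ := fun v hv => mem_compl.2 (Finset.disjoint_left.1 hED hv)
  have hDcompl : #D ≤ #Dᶜ := by rw [card_compl]; omega
  obtain ⟨F, hEF, hFcompl, hF⟩ := exists_subsuperset_card_eq hEcompl hle hDcompl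
  exact hacc F (fun v hv => mem_compl.1 (hFcompl hv)) hF (hE.mono hEF)

section Cycle

variable {m : ℕ}

theorem cycleGraph_adj_add_one_left (v : Fin (m + 2)) : (cycleGraph (m + 2)).Adj (v + 1) v :=
  Or.inl (add_sub_cancel_left v 1)

theorem cycleGraph_adj_sub_one_left (v : Fin (m + 2)) : (cycleGraph (m + 2)).Adj (v - 1) v :=
  Or.inr (sub_sub_cancel v 1)

variable (D : Finset (Fin (m + 2)))

def outNeighbor (j : Fin (m + 2)) : Fin (m + 2) :=
  if j + 1 ∈ D then j - 1 else j + 1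

theorem outNeighbor_adj (j : Fin (m + 2)) : (cycleGraph (m + 2)).Adj (outNeighbor D j) j := by
  unfold outNeighbor
  split_ifs
  · exact cycleGraph_adj_sub_one_left j
  · exact cycleGraph_adj_add_one_left j

theorem outNeighbor_sub_one {v : Fin (m + 2)} (hv : v ∉ D) : outNeighbor D (v - 1) = v := by
  simp [outNeighbor, hv]

theorem outNeighbor_notMem (hcons : ¬ ∃ j, j ∈ D ∧ j + 1 ∈ D ∧ j + 2 ∈ D) {j : Fin (m + 2)}
    (hj : j ∈ D) : outNeighbor D j ∉ D := by
  unfold outNeighbor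
  split_ifs with hsucc
  · intro hpred
    have : j - 1 + 2 = j + 1 := by open Fin.CommRing in ring
    exact hcons ⟨j - 1, hpred, by rwa [sub_add_cancel], by rwa [this]⟩
  · exact hsucc

theorem disjoint_image_outNeighbor (hcons : ¬ ∃ j, j ∈ D ∧ j + 1 ∈ D ∧ j + 2 ∈ D) :
    Disjoint (D.image (outNeighbor D)) D := by
  rw [Finset.disjoint_left]
  rintro _ hv
  obtain ⟨j, hj, rfl⟩ := mem_image.1 hv
  exact outNeighbor_notMem D hcons hj

theorem isDomSet_image_outNeighbor (hdom : IsDomSet (cycleGraph (m + 2)) D) :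
    IsDomSet (cycleGraph (m + 2)) (D.image (outNeighbor D)) := by
  have hmem_of_pred_mem : ∀ v, v ∉ D → v - 1 ∈ D → v ∈ D.image (outNeighbor D) := fun v hv hv1 =>
    mem_image.2 ⟨v - 1, hv1, outNeighbor_sub_one D hv⟩
  intro v hvE
  by_cases hv : v ∈ D
  · exact ⟨outNeighbor D v, mem_image_of_mem _ hv, outNeighbor_adj D v⟩
  by_cases hv1 : v - 1 ∈ D
  · exact absurd (hmem_of_pred_mem v hv hv1) hvE
  -- `v - 1` is dominated by `v - 2`, whose out-neighbour `v - 1` is adjacent to `v`.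
  obtain ⟨u, hu, hadj⟩ := hdom (v - 1) hv1
  have hu2 : u = v - 1 - 1 := by
    rcases hadj with h | h
    · rw [sub_eq_iff_eq_add, add_sub_cancel] at h
      exact absurd (h ▸ hu) hv
    · exact eq_sub_of_add_eq (sub_eq_iff_eq_add'.1 h).symm
  subst hu2
  exact ⟨v - 1, hmem_of_pred_mem (v - 1) hv1 hu, cycleGraph_adj_sub_one_left v⟩

end Cycle

/-- If a dominating set `D` of the cycle `C_n` (`n ≥ 3`) has `|D| ≤ n/2` and contains
no three cyclically consecutive vertices, then `D` is not an accurate dominating set. -/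
theorem cycle_not_accurate_of_no_three_consecutive (n : ℕ) [NeZero n] (hn : 3 ≤ n)
    (D : Finset (Fin n)) (hdom : IsDomSet (SimpleGraph.cycleGraph n) D)
    (hcard : 2 * D.card ≤ n)
    (hcons : ¬ ∃ j : Fin n, j ∈ D ∧ j + 1 ∈ D ∧ j + 2 ∈ D) :
    ¬ IsAccDomSet (SimpleGraph.cycleGraph n) D := by
  obtain ⟨m, rfl⟩ : ∃ m, n = m + 2 := ⟨n - 2, by omega⟩
  exact not_isAccDomSet_of_isDomSet_of_disjoint (isDomSet_image_outNeighbor D hdom)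
    (disjoint_image_outNeighbor D hcons) card_image_le (by rwa [Fintype.card_fin])
end
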